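/- arXiv:2305.17095 — 3 statements merged into one kernel-verified Lean document; each statement's English description precedes it below -/
import Mathlib

section
/- Let λ be a nonnegative random variable with cdf F, and let X | λ ~ Poisson(λ). Then the survival function of the Poisson mixture X satisfies: for all x ≥ 0, P(X > x) = ∫_0^∞ (λ^{⌊x⌋} e^{−λ} / ⌊x⌋!) (1 − F(λ)) dλ. -/
open Filter MeasureTheory
open scoped ENNReal

private lemma pms_summable (l : ℝ) :
    Summable (fun m : ℕ => l ^ m * Real.exp (-l) / (Nat.factorial m : ℝ)) := by
  have := (Real.summable_pow_div_factorial l).mul_right (Real.exp (-l))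
  refine this.congr fun m => ?_
  ring

private lemma pms_exp_tsum (l : ℝ) :
    ∑' m : ℕ, l ^ m / (Nat.factorial m : ℝ) = Real.exp l := by
  rw [Real.exp_eq_exp_ℝ, NormedSpace.exp_eq_tsum_div]

private lemma pms_total (l : ℝ) :
    ∑' m : ℕ, l ^ m * Real.exp (-l) / (Nat.factorial m : ℝ) = 1 := by
  calc ∑' m : ℕ, l ^ m * Real.exp (-l) / (Nat.factorial m : ℝ)
      = (∑' m : ℕ, l ^ m / (Nat.factorial m : ℝ)) * Real.exp (-l) := by
        rw [← tsum_mul_right]; exact tsum_congr fun m => by ring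
    _ = 1 := by rw [pms_exp_tsum, ← Real.exp_add]; simp

private lemma pms_hasDerivAt (n : ℕ) (l : ℝ) :
    HasDerivAt
      (fun y : ℝ => ∑ m ∈ Finset.range (n + 1), y ^ m * Real.exp (-y) / (Nat.factorial m : ℝ))
      (-(l ^ n * Real.exp (-l) / (Nat.factorial n : ℝ))) l := by
  have he : HasDerivAt (fun y : ℝ => Real.exp (-y)) (-Real.exp (-l)) l := by
    simpa using (hasDerivAt_neg l).exp
  induction n with
  | zero => simpa using he
  | succ n ih =>
    have hterm : HasDerivAt
        (fun y : ℝ => y ^ (n + 1) * Real.exp (-y) / (Nat.factorial (n + 1) : ℝ))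
        ((((n : ℝ) + 1) * l ^ n * Real.exp (-l) + l ^ (n + 1) * (-Real.exp (-l))) /
          (Nat.factorial (n + 1) : ℝ)) l := by
      have := ((hasDerivAt_pow (n + 1) l).mul he).div_const ((Nat.factorial (n + 1) : ℝ))
      simpa using this
    have hsum := ih.add hterm
    have heq : (fun y : ℝ =>
        ∑ m ∈ Finset.range (n + 2), y ^ m * Real.exp (-y) / (Nat.factorial m : ℝ))
        = fun y : ℝ => (∑ m ∈ Finset.range (n + 1), y ^ m * Real.exp (-y) / (Nat.factorial m : ℝ))
          + y ^ (n + 1) * Real.exp (-y) / (Nat.factorial (n + 1) : ℝ) := by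
      funext y; rw [Finset.sum_range_succ]
    rw [heq]
    convert hsum using 1
    case e'_4 => rfl
    case e'_5 => rfl
    case e'_8 => rfl
    have h1 : (Nat.factorial n : ℝ) ≠ 0 := Nat.cast_ne_zero.2 n.factorial_ne_zero
    have hfac : (Nat.factorial (n + 1) : ℝ) = ((n : ℝ) + 1) * (Nat.factorial n : ℝ) := by
      rw [Nat.factorial_succ]; push_cast; ring
    have h2 : ((n : ℝ) + 1) ≠ 0 := by positivity
    rw [hfac]
    field_simp
    ring

private lemma pms_tail_summable (n : ℕ) (l : ℝ) :
    Summable (fun k : ℕ => l ^ (n + 1 + k) * Real.exp (-l) / (Nat.factorial (n + 1 + k) : ℝ)) := by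
  have := (summable_nat_add_iff (f := fun m : ℕ =>
    l ^ m * Real.exp (-l) / (Nat.factorial m : ℝ)) (n + 1)).2 (pms_summable l)
  refine this.congr fun k => ?_
  rw [add_comm k (n + 1)]

private lemma pms_tail (n : ℕ) (l : ℝ) :
    ∑' k : ℕ, l ^ (n + 1 + k) * Real.exp (-l) / (Nat.factorial (n + 1 + k) : ℝ)
      = ∫ t in (0 : ℝ)..l, t ^ n * Real.exp (-t) / (Nat.factorial n : ℝ) := by
  have htail : ∑' k : ℕ, l ^ (n + 1 + k) * Real.exp (-l) / (Nat.factorial (n + 1 + k) : ℝ)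
      = 1 - ∑ m ∈ Finset.range (n + 1), l ^ m * Real.exp (-l) / (Nat.factorial m : ℝ) := by
    have h2 : ∑' k : ℕ, l ^ (n + 1 + k) * Real.exp (-l) / (Nat.factorial (n + 1 + k) : ℝ)
        = ∑' k : ℕ, l ^ (k + (n + 1)) * Real.exp (-l) / (Nat.factorial (k + (n + 1)) : ℝ) :=
      tsum_congr fun k => by rw [add_comm (n + 1) k]
    have h3 := Summable.sum_add_tsum_nat_add (f := fun m : ℕ =>
      l ^ m * Real.exp (-l) / (Nat.factorial m : ℝ)) (n + 1) (pms_summable l)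
    rw [pms_total l] at h3
    rw [h2]
    linarith
  have hderiv : ∀ y ∈ Set.uIcc (0 : ℝ) l, HasDerivAt
      (fun y : ℝ => 1 - ∑ m ∈ Finset.range (n + 1), y ^ m * Real.exp (-y) / (Nat.factorial m : ℝ))
      (y ^ n * Real.exp (-y) / (Nat.factorial n : ℝ)) y := fun y _ => by
    simpa using (pms_hasDerivAt n y).const_sub 1
  have hcont : IntervalIntegrable
      (fun t : ℝ => t ^ n * Real.exp (-t) / (Nat.factorial n : ℝ)) volume 0 l :=
    (Continuous.intervalIntegrable (by continuity) 0 l)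
  have hFTC := intervalIntegral.integral_eq_sub_of_hasDerivAt hderiv hcont
  have h0 : ∑ m ∈ Finset.range (n + 1), (0 : ℝ) ^ m * Real.exp (-0) / (Nat.factorial m : ℝ)
      = 1 := by
    rw [Finset.sum_eq_single 0]
    · simp
    · intro b _ hb; simp [zero_pow hb]
    · intro h; exact absurd (Finset.mem_range.2 (Nat.succ_pos n)) h
  rw [htail, hFTC, h0]
  ring

theorem poisson_mixture_survival_integral
    (μ : Measure ℝ) [IsProbabilityMeasure μ]
    (hsupp : μ (Set.Iic 0) = 0)
    (F : ℝ → ℝ) (hF : ∀ x : ℝ, F x = (μ (Set.Iic x)).toReal)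
    (p : ℕ → ℝ)
    (hp : ∀ n : ℕ, p n = ∫ l, l ^ n * Real.exp (-l) / (Nat.factorial n : ℝ) ∂μ)
    (S : ℝ → ℝ) (hS : ∀ x : ℝ, S x = ∑' k : ℕ, p (Nat.floor x + 1 + k)) :
    ∀ x : ℝ, 0 ≤ x →
      S x = ∫ l in Set.Ioi (0 : ℝ),
        l ^ (Nat.floor x) * Real.exp (-l) / (Nat.factorial (Nat.floor x) : ℝ) * (1 - F l) := by
  intro x _hx
  set n : ℕ := Nat.floor x with hn
  have hae : ∀ᵐ l ∂μ, 0 < l := by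
    rw [ae_iff]
    refine measure_mono_null (fun l hl => ?_) hsupp
    simpa using not_lt.mp hl
  set g : ℝ → ℝ := fun t => t ^ n * Real.exp (-t) / (Nat.factorial n : ℝ) with hg
  set gE : ℝ → ℝ≥0∞ := fun t => ENNReal.ofReal (g t) with hgE
  have hgcont : Continuous g := by rw [hg]; continuity
  have hgE_meas : Measurable gE := ENNReal.measurable_ofReal.comp hgcont.measurable
  -- Step 1 : p as a lintegral
  have hp' : ∀ m : ℕ, p m =
      (∫⁻ l, ENNReal.ofReal (l ^ m * Real.exp (-l) / (Nat.factorial m : ℝ)) ∂μ).toReal := by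
    intro m
    rw [hp m]
    apply integral_eq_lintegral_of_nonneg_ae
    · filter_upwards [hae] with l hl
      have : (0:ℝ) ≤ l := hl.le
      positivity
    · exact (Continuous.aestronglyMeasurable (by continuity))
  -- bound : each lintegral is at most 1
  have hbound : ∀ m : ℕ,
      (∫⁻ l, ENNReal.ofReal (l ^ m * Real.exp (-l) / (Nat.factorial m : ℝ)) ∂μ) ≤ 1 := by
    intro m
    have hle : ∀ᵐ l ∂μ,
        ENNReal.ofReal (l ^ m * Real.exp (-l) / (Nat.factorial m : ℝ)) ≤ 1 := by
      filter_upwards [hae] with l hl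
      rw [show (1 : ℝ≥0∞) = ENNReal.ofReal 1 by simp]
      apply ENNReal.ofReal_le_ofReal
      have hsum : Summable (fun k : ℕ => l ^ k / (Nat.factorial k : ℝ)) :=
        Real.summable_pow_div_factorial l
      have h1 : l ^ m / (Nat.factorial m : ℝ) ≤ Real.exp l := by
        rw [← pms_exp_tsum l]
        refine Summable.le_tsum hsum m fun j _ => ?_
        have : (0:ℝ) ≤ l := hl.le
        positivity
      have h2 := mul_le_mul_of_nonneg_right h1 (Real.exp_nonneg (-l))
      rw [← Real.exp_add] at h2
      simp only [add_neg_cancel, Real.exp_zero] at h2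
      calc l ^ m * Real.exp (-l) / (Nat.factorial m : ℝ)
          = l ^ m / (Nat.factorial m : ℝ) * Real.exp (-l) := by ring
        _ ≤ 1 := h2
    calc (∫⁻ l, ENNReal.ofReal (l ^ m * Real.exp (-l) / (Nat.factorial m : ℝ)) ∂μ)
        ≤ ∫⁻ _, 1 ∂μ := lintegral_mono_ae hle
      _ = 1 := by simp
  -- Step 2-3 : S x as a single lintegral
  rw [hS x]
  have h2 : ∑' k : ℕ, p (n + 1 + k)
      = (∑' k : ℕ, ∫⁻ l,
          ENNReal.ofReal (l ^ (n + 1 + k) * Real.exp (-l) / (Nat.factorial (n + 1 + k) : ℝ))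
          ∂μ).toReal := by
    rw [ENNReal.tsum_toReal_eq (fun k => ((hbound _).trans_lt ENNReal.one_lt_top).ne)]
    exact tsum_congr fun k => hp' _
  have h3 : (∑' k : ℕ, ∫⁻ l,
      ENNReal.ofReal (l ^ (n + 1 + k) * Real.exp (-l) / (Nat.factorial (n + 1 + k) : ℝ)) ∂μ)
      = ∫⁻ l, ∑' k : ℕ,
        ENNReal.ofReal (l ^ (n + 1 + k) * Real.exp (-l) / (Nat.factorial (n + 1 + k) : ℝ)) ∂μ := by
    refine (lintegral_tsum fun k => ?_).symm
    exact (ENNReal.measurable_ofReal.comp (by continuity : Continuous fun l : ℝ =>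
      l ^ (n + 1 + k) * Real.exp (-l) / (Nat.factorial (n + 1 + k) : ℝ)).measurable).aemeasurable
  -- Step 4 : pointwise identification with the interval integral
  have h4 : ∀ᵐ l ∂μ,
      (∑' k : ℕ, ENNReal.ofReal
        (l ^ (n + 1 + k) * Real.exp (-l) / (Nat.factorial (n + 1 + k) : ℝ)))
      = ENNReal.ofReal (∫ t in (0 : ℝ)..l, g t) := by
    filter_upwards [hae] with l hl
    rw [← ENNReal.ofReal_tsum_of_nonneg (fun k => by
        have : (0:ℝ) ≤ l := hl.le
        positivity) (pms_tail_summable n l)]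
    rw [pms_tail n l]
  -- Step 5 : Fubini
  have h5 : (∫⁻ l, ENNReal.ofReal (∫ t in (0 : ℝ)..l, g t) ∂μ)
      = ∫⁻ t in Set.Ioi (0 : ℝ), gE t * μ (Set.Ioi t) := by
    have hstep : ∀ᵐ l ∂μ, ENNReal.ofReal (∫ t in (0 : ℝ)..l, g t)
        = ∫⁻ t, (Set.Ioo (0 : ℝ) l).indicator gE t := by
      filter_upwards [hae] with l hl
      rw [intervalIntegral.integral_of_le hl.le, integral_Ioc_eq_integral_Ioo]
      rw [ofReal_integral_eq_lintegral_ofReal]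
      · rw [lintegral_indicator measurableSet_Ioo]
      · exact (hgcont.integrableOn_Ioc).mono_set Set.Ioo_subset_Ioc_self
      · refine (ae_restrict_iff' measurableSet_Ioo).2 (ae_of_all _ fun t ht => ?_)
        have : (0:ℝ) ≤ t := ht.1.le
        rw [hg]; positivity
    rw [lintegral_congr_ae hstep]
    have hset : MeasurableSet {q : ℝ × ℝ | 0 < q.2 ∧ q.2 < q.1} := by
      refine MeasurableSet.inter ?_ ?_
      · exact measurableSet_lt measurable_const measurable_snd
      · exact measurableSet_lt measurable_snd measurable_fst
    have hfun : (Function.uncurry fun (l t : ℝ) => (Set.Ioo (0 : ℝ) l).indicator gE t)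
        = {q : ℝ × ℝ | 0 < q.2 ∧ q.2 < q.1}.indicator (fun q => gE q.2) := by
      funext q
      simp only [Function.uncurry, Set.indicator_apply, Set.mem_Ioo, Set.mem_setOf_eq]
    have hswap := lintegral_lintegral_swap (μ := μ) (ν := volume)
      (f := fun (l t : ℝ) => (Set.Ioo (0 : ℝ) l).indicator gE t)
      (by rw [hfun]; exact (((hgE_meas.comp measurable_snd).indicator hset).aemeasurable))
    rw [hswap]
    have hinner : ∀ t : ℝ, (∫⁻ l, (Set.Ioo (0 : ℝ) l).indicator gE t ∂μ)
        = (Set.Ioi (0 : ℝ)).indicator (fun t => gE t * μ (Set.Ioi t)) t := by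
      intro t
      by_cases ht : 0 < t
      · have heq : (fun l : ℝ => (Set.Ioo (0 : ℝ) l).indicator gE t)
            = (Set.Ioi t).indicator (fun _ => gE t) := by
          funext l
          by_cases hlt : t < l
          · rw [Set.indicator_of_mem (Set.mem_Ioo.2 ⟨ht, hlt⟩),
              Set.indicator_of_mem (Set.mem_Ioi.2 hlt)]
          · rw [Set.indicator_of_notMem (fun hmem => hlt hmem.2),
              Set.indicator_of_notMem (show l ∉ Set.Ioi t from fun hmem => hlt hmem)]
        rw [heq, lintegral_indicator_const measurableSet_Ioi,
          Set.indicator_of_mem (Set.mem_Ioi.2 ht)]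
      · have heq : (fun l : ℝ => (Set.Ioo (0 : ℝ) l).indicator gE t) = fun _ => 0 :=
          funext fun l => Set.indicator_of_notMem (fun hmem => ht hmem.1) _
        rw [heq, lintegral_zero, Set.indicator_of_notMem (show t ∉ Set.Ioi (0:ℝ) from fun hmem => ht hmem)]
    rw [lintegral_congr hinner, lintegral_indicator measurableSet_Ioi]
  -- Step 6 : identify the right-hand side
  have hFmeas : Measurable F := by
    have : F = fun l => (μ (Set.Iic l)).toReal := funext hF
    rw [this]
    have hmono : Monotone fun l : ℝ => μ (Set.Iic l) :=
      fun a b hab => measure_mono (Set.Iic_subset_Iic.2 hab)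
    exact ENNReal.measurable_toReal.comp hmono.measurable
  have hFle : ∀ l : ℝ, 1 - F l = (μ (Set.Ioi l)).toReal := by
    intro l
    rw [hF l]
    have hc : μ (Set.Ioi l) = 1 - μ (Set.Iic l) := by
      rw [← Set.compl_Iic, measure_compl measurableSet_Iic (measure_ne_top μ _), measure_univ]
    rw [hc, ENNReal.toReal_sub_of_le prob_le_one (by simp)]
    simp
  have hF1 : ∀ l : ℝ, F l ≤ 1 := by
    intro l
    rw [hF l]
    calc (μ (Set.Iic l)).toReal ≤ (1 : ℝ≥0∞).toReal :=
      ENNReal.toReal_mono (by simp) prob_le_one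
      _ = 1 := by simp
  have h6 : ∫ l in Set.Ioi (0 : ℝ), g l * (1 - F l)
      = (∫⁻ l in Set.Ioi (0 : ℝ), gE l * μ (Set.Ioi l)).toReal := by
    rw [integral_eq_lintegral_of_nonneg_ae]
    · congr 1
      refine lintegral_congr_ae ?_
      filter_upwards [ae_restrict_mem measurableSet_Ioi] with l hl
      have hgnn : 0 ≤ g l := by
        have : (0:ℝ) ≤ l := (Set.mem_Ioi.1 hl).le
        rw [hg]; positivity
      rw [ENNReal.ofReal_mul hgnn, hFle l, ENNReal.ofReal_toReal (measure_ne_top μ _)]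
    · refine (ae_restrict_iff' measurableSet_Ioi).2 (ae_of_all _ fun l hl => ?_)
      have hgnn : 0 ≤ g l := by
        have : (0:ℝ) ≤ l := (Set.mem_Ioi.1 hl).le
        rw [hg]; positivity
      exact mul_nonneg hgnn (by linarith [hF1 l])
    · exact (hgcont.measurable.mul
        (measurable_const.sub hFmeas)).aestronglyMeasurable
  calc ∑' k : ℕ, p (n + 1 + k)
      = (∑' k : ℕ, ∫⁻ l,
          ENNReal.ofReal (l ^ (n + 1 + k) * Real.exp (-l) / (Nat.factorial (n + 1 + k) : ℝ))
          ∂μ).toReal := h2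
    _ = (∫⁻ l, ∑' k : ℕ,
          ENNReal.ofReal (l ^ (n + 1 + k) * Real.exp (-l) / (Nat.factorial (n + 1 + k) : ℝ))
          ∂μ).toReal := by rw [h3]
    _ = (∫⁻ l, ENNReal.ofReal (∫ t in (0 : ℝ)..l, g t) ∂μ).toReal := by
        rw [lintegral_congr_ae h4]
    _ = (∫⁻ t in Set.Ioi (0 : ℝ), gE t * μ (Set.Ioi t)).toReal := by rw [h5]
    _ = ∫ l in Set.Ioi (0 : ℝ), g l * (1 - F l) := h6.symm
end

section
/- Let X be a Poisson mixture where λ = x₀·B with B ~ Beta(α, β), α, β > 0, x₀ > 0. Then P(X = n) ∼ (Γ(α+β)/Γ(α)) n^{−β} · (x₀^n e^{−x₀}/n!) as n → ∞. -/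
open Filter MeasureTheory Set

lemma gammaProd (x : ℝ) (hx : 0 < x) (n : ℕ) :
    Real.Gamma (x + n) = Real.Gamma x * ∏ j ∈ Finset.range n, (x + j) := by
  induction n with
  | zero => simp
  | succ n ih =>
    have hxn : x + n ≠ 0 := by positivity
    have : (x : ℝ) + (n + 1 : ℕ) = (x + n) + 1 := by push_cast; ring
    rw [this, Real.Gamma_add_one hxn, ih, Finset.prod_range_succ]
    ring

lemma gammaRatio (α b : ℝ) (hα : 0 < α) (hb : 0 < b) :
    Tendsto (fun n : ℕ => (n:ℝ)^b * Real.Gamma (n + α) / Real.Gamma (n + α + b))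
      atTop (nhds 1) := by
  have hΓα : Real.Gamma α ≠ 0 := (Real.Gamma_pos_of_pos hα).ne'
  have hΓab : Real.Gamma (α + b) ≠ 0 := (Real.Gamma_pos_of_pos (by linarith)).ne'
  -- Q n := GammaSeq (α+b) n / GammaSeq α n → Γ(α+b)/Γα
  have hQ : Tendsto (fun n : ℕ => Real.GammaSeq (α + b) n / Real.GammaSeq α n)
      atTop (nhds (Real.Gamma (α + b) / Real.Gamma α)) :=
    (Real.GammaSeq_tendsto_Gamma (α + b)).div (Real.GammaSeq_tendsto_Gamma α) hΓα
  have hfrac : Tendsto (fun n : ℕ => (α + b + n) / (α + n)) atTop (nhds 1) := by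
    have h1 : Tendsto (fun n : ℕ => b / (α + n)) atTop (nhds 0) := by
      apply Tendsto.div_atTop tendsto_const_nhds
      exact tendsto_atTop_add_const_left _ _ tendsto_natCast_atTop_atTop
    have := h1.const_add 1
    simp only [add_zero] at this
    apply this.congr' ?_
    filter_upwards [eventually_gt_atTop 0] with n hn
    have hαn : (α : ℝ) + n ≠ 0 := by positivity
    field_simp
    ring
  have key : Tendsto (fun n : ℕ =>
      (Real.Gamma α / Real.Gamma (α + b)) *
        ((Real.GammaSeq (α + b) n / Real.GammaSeq α n) * ((α + b + n) / (α + n))))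
      atTop (nhds 1) := by
    have := (hQ.mul hfrac).const_mul (Real.Gamma α / Real.Gamma (α + b))
    rw [mul_one] at this
    convert this using 2
    field_simp
  apply key.congr'
  filter_upwards [eventually_gt_atTop 0] with n hn
  have hnR : (0:ℝ) < n := by exact_mod_cast hn
  have hprodα : ∀ m : ℕ, (0:ℝ) < ∏ j ∈ Finset.range m, (α + j) := by
    intro m; apply Finset.prod_pos; intro j _; positivity
  have hprodab : ∀ m : ℕ, (0:ℝ) < ∏ j ∈ Finset.range m, (α + b + j) := by
    intro m; apply Finset.prod_pos; intro j _; positivity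
  have hGα : Real.Gamma (n + α) = Real.Gamma α * ∏ j ∈ Finset.range n, (α + j) := by
    rw [add_comm (n:ℝ) α]; exact gammaProd α hα n
  have hGab : Real.Gamma (n + α + b) = Real.Gamma (α + b) * ∏ j ∈ Finset.range n, (α + b + j) := by
    have : (n:ℝ) + α + b = (α + b) + n := by ring
    rw [this]; exact gammaProd (α + b) (by linarith) n
  rw [hGα, hGab, Real.GammaSeq, Real.GammaSeq, Finset.prod_range_succ, Finset.prod_range_succ]
  have hfac : (0:ℝ) < (Nat.factorial n : ℝ) := by positivity
  have hrab : (0:ℝ) < (n:ℝ) ^ (α + b) := Real.rpow_pos_of_pos hnR _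
  have hra : (0:ℝ) < (n:ℝ) ^ α := Real.rpow_pos_of_pos hnR _
  have hpow : (n:ℝ) ^ (α + b) = (n:ℝ) ^ α * (n:ℝ) ^ b := Real.rpow_add hnR _ _
  rw [hpow]
  have h1 := (hprodα n).ne'
  have h2 := (hprodab n).ne'
  have h3 : (α : ℝ) + n ≠ 0 := by positivity
  have h4 : (α : ℝ) + b + n ≠ 0 := by positivity
  field_simp

lemma betaComplexEq (a b : ℝ) (ha : 0 < a) (hb : 0 < b) :
    ∀ x ∈ Ioo (0:ℝ) 1,
      (x:ℂ) ^ ((a:ℂ) - 1) * (1 - (x:ℂ)) ^ ((b:ℂ) - 1)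
        = ((x ^ (a-1) * (1-x) ^ (b-1) : ℝ) : ℂ) := by
  intro x hx
  have h1 : ((x ^ (a-1) : ℝ) : ℂ) = (x:ℂ) ^ ((a:ℂ) - 1) := by
    rw [Complex.ofReal_cpow hx.1.le]; push_cast; ring_nf
  have h2 : (((1-x) ^ (b-1) : ℝ) : ℂ) = (1 - (x:ℂ)) ^ ((b:ℂ) - 1) := by
    rw [Complex.ofReal_cpow (by linarith [hx.2] : (0:ℝ) ≤ 1 - x)]; push_cast; ring_nf
  push_cast
  rw [h1, h2]

lemma betaIntegrableOn (a b : ℝ) (ha : 0 < a) (hb : 0 < b) :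
    IntegrableOn (fun s : ℝ => s ^ (a-1) * (1-s) ^ (b-1)) (Ioo 0 1) := by
  have hc := Complex.betaIntegral_convergent (u := (a:ℂ)) (v := (b:ℂ))
    (by simpa using ha) (by simpa using hb)
  have hc' : IntegrableOn (fun x : ℝ => (x:ℂ) ^ ((a:ℂ) - 1) * (1 - (x:ℂ)) ^ ((b:ℂ) - 1))
      (Ioo 0 1) := by
    have := (intervalIntegrable_iff_integrableOn_Ioc_of_le zero_le_one).mp hc
    exact this.mono_set Ioo_subset_Ioc_self
  have hc'' : IntegrableOn (fun x : ℝ => ((x ^ (a-1) * (1-x) ^ (b-1) : ℝ) : ℂ)) (Ioo 0 1) := by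
    apply hc'.congr_fun (betaComplexEq a b ha hb) measurableSet_Ioo
  have h2 : IntegrableOn
      (fun x : ℝ => RCLike.re ((x ^ (a-1) * (1-x) ^ (b-1) : ℝ) : ℂ)) (Ioo 0 1) := hc''.re
  exact h2.congr_fun (fun x _ => by simp) measurableSet_Ioo

lemma betaValue (a b : ℝ) (ha : 0 < a) (hb : 0 < b) :
    ∫ s in Ioo (0:ℝ) 1, s ^ (a-1) * (1-s) ^ (b-1)
      = Real.Gamma a * Real.Gamma b / Real.Gamma (a + b) := by
  have hab : (0:ℝ) < a + b := by linarith
  have hΓ : (Real.Gamma (a+b)) ≠ 0 := (Real.Gamma_pos_of_pos hab).ne'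
  have hcm := Complex.Gamma_mul_Gamma_eq_betaIntegral (s := (a:ℂ)) (t := (b:ℂ))
    (by simpa using ha) (by simpa using hb)
  have hbeta : Complex.betaIntegral a b
      = ((∫ s in Ioo (0:ℝ) 1, s ^ (a-1) * (1-s) ^ (b-1) : ℝ) : ℂ) := by
    rw [Complex.betaIntegral, intervalIntegral.integral_of_le zero_le_one,
      MeasureTheory.integral_Ioc_eq_integral_Ioo]
    rw [MeasureTheory.setIntegral_congr_fun measurableSet_Ioo (betaComplexEq a b ha hb)]
    exact integral_ofReal
  rw [hbeta] at hcm
  have hΓc : Complex.Gamma ((a:ℂ) + b) ≠ 0 :=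
    Complex.Gamma_ne_zero_of_re_pos (by simpa using hab)
  have : ((∫ s in Ioo (0:ℝ) 1, s ^ (a-1) * (1-s) ^ (b-1) : ℝ) : ℂ)
      = Complex.Gamma a * Complex.Gamma b / Complex.Gamma ((a:ℂ) + b) := by
    rw [eq_div_iff hΓc]
    linear_combination -hcm
  rw [show ((a:ℂ) + b) = ((a + b : ℝ) : ℂ) by push_cast; ring] at this
  rw [Complex.Gamma_ofReal, Complex.Gamma_ofReal, Complex.Gamma_ofReal] at this
  exact_mod_cast this

lemma substIoo (x₀ : ℝ) (hx₀ : 0 < x₀) (f : ℝ → ℝ) :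
    ∫ t in Ioo (0:ℝ) x₀, f t = x₀ * ∫ s in Ioo (0:ℝ) 1, f (x₀ * s) := by
  have hmem : ∀ s : ℝ, s ∈ Ioo (0:ℝ) 1 ↔ x₀ * s ∈ Ioo (0:ℝ) x₀ := by
    intro s
    constructor
    · rintro ⟨h1, h2⟩
      exact ⟨by positivity, by nlinarith⟩
    · rintro ⟨h1, h2⟩
      constructor
      · by_contra h; push_neg at h; nlinarith
      · by_contra h; push_neg at h; nlinarith
  have hind : ∀ s : ℝ, (Ioo (0:ℝ) 1).indicator (fun s => f (x₀ * s)) s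
      = (Ioo (0:ℝ) x₀).indicator f (x₀ * s) := by
    intro s
    by_cases hs : s ∈ Ioo (0:ℝ) 1
    · rw [Set.indicator_of_mem hs, Set.indicator_of_mem ((hmem s).mp hs)]
    · rw [Set.indicator_of_notMem hs,
        Set.indicator_of_notMem (fun h => hs ((hmem s).mpr h))]
  rw [← MeasureTheory.integral_indicator measurableSet_Ioo,
    ← MeasureTheory.integral_indicator measurableSet_Ioo]
  calc ∫ t, (Ioo (0:ℝ) x₀).indicator f t
      = x₀ * (|x₀⁻¹| • ∫ t, (Ioo (0:ℝ) x₀).indicator f t) := by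
        rw [abs_of_nonneg (by positivity), smul_eq_mul, ← mul_assoc,
          mul_inv_cancel₀ hx₀.ne', one_mul]
    _ = x₀ * ∫ s, (Ioo (0:ℝ) x₀).indicator f (x₀ * s) := by
        rw [MeasureTheory.Measure.integral_comp_mul_left (fun t => (Ioo (0:ℝ) x₀).indicator f t) x₀]
    _ = x₀ * ∫ s, (Ioo (0:ℝ) 1).indicator (fun s => f (x₀ * s)) s := by
        congr 1; exact integral_congr_ae (Filter.Eventually.of_forall fun s => (hind s).symm)

theorem poisson_beta_pmf_asymptotics
    (α β x₀ : ℝ) (hα : 0 < α) (hβ : 0 < β) (hx₀ : 0 < x₀)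
    (fd : ℝ → ℝ)
    (hfd : ∀ t ∈ Set.Ioo (0 : ℝ) x₀, fd t =
      Real.Gamma (α + β) / (Real.Gamma α * Real.Gamma β) *
        (t / x₀) ^ (α - 1) * (1 - t / x₀) ^ (β - 1) / x₀)
    (P : ℕ → ℝ)
    (hP : ∀ n : ℕ, P n = ∫ t in Set.Ioo (0 : ℝ) x₀,
        t ^ n * Real.exp (-t) / (Nat.factorial n : ℝ) * fd t) :
    Tendsto (fun n : ℕ => P n /
        (Real.Gamma (α + β) / Real.Gamma α * (n : ℝ) ^ (-β) *
          (x₀ ^ n * Real.exp (-x₀) / (Nat.factorial n : ℝ))))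
      atTop (nhds 1) := by
  have hΓα := Real.Gamma_pos_of_pos hα
  have hΓβ := Real.Gamma_pos_of_pos hβ
  have hΓαβ := Real.Gamma_pos_of_pos (show (0:ℝ) < α + β by linarith)
  set C := Real.Gamma (α + β) / (Real.Gamma α * Real.Gamma β) with hC
  set I : ℕ → ℝ := fun n => ∫ s in Ioo (0:ℝ) 1,
      s ^ ((n:ℝ) + α - 1) * (1-s) ^ (β - 1) * Real.exp (-(x₀ * s)) with hIdef
  -- Step 1 : P n = x₀^n / n! * C * I n
  have hPn : ∀ n : ℕ, P n = x₀ ^ n / (Nat.factorial n : ℝ) * C * I n := by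
    intro n
    rw [hP n]
    have h1 : ∫ t in Ioo (0:ℝ) x₀, t ^ n * Real.exp (-t) / (Nat.factorial n : ℝ) * fd t
        = ∫ t in Ioo (0:ℝ) x₀, (fun t => t ^ n * Real.exp (-t) / (Nat.factorial n : ℝ) *
            (C * (t / x₀) ^ (α - 1) * (1 - t / x₀) ^ (β - 1) / x₀)) t := by
      apply setIntegral_congr_fun measurableSet_Ioo
      intro t ht
      simp only
      rw [hfd t ht]
    rw [h1, substIoo x₀ hx₀]
    have h2 : ∀ s ∈ Ioo (0:ℝ) 1,
        (fun t => t ^ n * Real.exp (-t) / (Nat.factorial n : ℝ) *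
            (C * (t / x₀) ^ (α - 1) * (1 - t / x₀) ^ (β - 1) / x₀)) (x₀ * s)
        = (x₀ ^ n * C / ((Nat.factorial n : ℝ) * x₀)) *
            (s ^ ((n:ℝ) + α - 1) * (1-s) ^ (β - 1) * Real.exp (-(x₀ * s))) := by
      intro s hs
      simp only
      have hs0 : 0 < s := hs.1
      have hdiv : x₀ * s / x₀ = s := by field_simp
      rw [hdiv]
      have hsn : s ^ ((n:ℝ) + α - 1) = s ^ n * s ^ (α - 1) := by
        rw [show (n:ℝ) + α - 1 = (n:ℝ) + (α - 1) by ring,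
          Real.rpow_add hs0, Real.rpow_natCast]
      rw [hsn, mul_pow]
      have hfac : (0:ℝ) < (Nat.factorial n : ℝ) := by positivity
      field_simp
    rw [setIntegral_congr_fun measurableSet_Ioo h2, MeasureTheory.integral_const_mul]
    have hfac : (0:ℝ) < (Nat.factorial n : ℝ) := by positivity
    rw [hIdef]
    field_simp
  -- basic positivity / integrability facts
  have hnn : ∀ n : ℕ, (0:ℝ) ≤ (n:ℝ) ^ β := fun n => Real.rpow_nonneg (Nat.cast_nonneg n) β
  have hJcont : ∀ n : ℕ, ContinuousOn
      (fun s : ℝ => s ^ ((n:ℝ) + α - 1) * (1-s) ^ (β - 1) * Real.exp (-(x₀ * s)))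
      (Ioo 0 1) := by
    intro n
    apply ContinuousOn.mul
    apply ContinuousOn.mul
    · exact continuousOn_id.rpow_const (fun x hx => Or.inl hx.1.ne')
    · exact (continuousOn_const.sub continuousOn_id).rpow_const
        (fun x hx => Or.inl (by simp; linarith [hx.2]))
    · exact (Real.continuous_exp.comp (continuous_const.mul continuous_id).neg).continuousOn
  have hJint : ∀ n : ℕ, IntegrableOn
      (fun s : ℝ => s ^ ((n:ℝ) + α - 1) * (1-s) ^ (β - 1) * Real.exp (-(x₀ * s)))
      (Ioo 0 1) := by
    intro n
    have hB := betaIntegrableOn ((n:ℝ) + α) β (by positivity) hβ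
    apply hB.mono' ((hJcont n).aestronglyMeasurable measurableSet_Ioo)
    filter_upwards [ae_restrict_mem measurableSet_Ioo] with s hs
    have hs0 : (0:ℝ) < s := hs.1
    have hs1 : (0:ℝ) < 1 - s := by linarith [hs.2]
    have hpos : (0:ℝ) < s ^ ((n:ℝ) + α - 1) * (1-s) ^ (β - 1) := by positivity
    rw [Real.norm_eq_abs, abs_of_nonneg (by positivity)]
    have hexp1 : Real.exp (-(x₀ * s)) ≤ 1 := Real.exp_le_one_iff.mpr (by nlinarith)
    calc s ^ ((n:ℝ) + α - 1) * (1-s) ^ (β - 1) * Real.exp (-(x₀ * s))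
        ≤ s ^ ((n:ℝ) + α - 1) * (1-s) ^ (β - 1) * 1 :=
          mul_le_mul_of_nonneg_left hexp1 hpos.le
      _ = s ^ ((n:ℝ) + α - 1) * (1-s) ^ (β - 1) := mul_one _
  -- lower bound
  have hlow : ∀ n : ℕ, Real.exp (-x₀) *
      (∫ s in Ioo (0:ℝ) 1, s ^ ((n:ℝ) + α - 1) * (1-s) ^ (β - 1)) ≤ I n := by
    intro n
    rw [← MeasureTheory.integral_const_mul]
    apply setIntegral_mono_on
    · exact (betaIntegrableOn ((n:ℝ) + α) β (by positivity) hβ).const_mul _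
    · exact hJint n
    · exact measurableSet_Ioo
    · intro s hs
      have hs0 : (0:ℝ) < s := hs.1
      have hs1 : (0:ℝ) < 1 - s := by linarith [hs.2]
      have hpos : (0:ℝ) ≤ s ^ ((n:ℝ) + α - 1) * (1-s) ^ (β - 1) := by positivity
      have hexp : Real.exp (-x₀) ≤ Real.exp (-(x₀ * s)) := by
        apply Real.exp_le_exp.mpr; nlinarith [hs.2]
      calc Real.exp (-x₀) * (s ^ ((n:ℝ) + α - 1) * (1-s) ^ (β - 1))
          = s ^ ((n:ℝ) + α - 1) * (1-s) ^ (β - 1) * Real.exp (-x₀) := by ring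
        _ ≤ s ^ ((n:ℝ) + α - 1) * (1-s) ^ (β - 1) * Real.exp (-(x₀ * s)) :=
            mul_le_mul_of_nonneg_left hexp hpos
  -- upper bound
  have hupp : ∀ n : ℕ, I n ≤ Real.exp (-x₀) *
      (∫ s in Ioo (0:ℝ) 1, s ^ ((n:ℝ) + α - 1) * (1-s) ^ (β - 1)) +
      x₀ * (∫ s in Ioo (0:ℝ) 1, s ^ ((n:ℝ) + α - 1) * (1-s) ^ (β + 1 - 1)) := by
    intro n
    have hB1 := betaIntegrableOn ((n:ℝ) + α) β (by positivity) hβ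
    have hB2 := betaIntegrableOn ((n:ℝ) + α) (β + 1) (by positivity) (by linarith)
    rw [← MeasureTheory.integral_const_mul, ← MeasureTheory.integral_const_mul,
      ← integral_add (hB1.const_mul _) (hB2.const_mul _)]
    apply setIntegral_mono_on (hJint n) ((hB1.const_mul _).add (hB2.const_mul _))
      measurableSet_Ioo
    intro s hs
    have hs0 : (0:ℝ) < s := hs.1
    have hs1 : (0:ℝ) < 1 - s := by linarith [hs.2]
    have hM : (0:ℝ) ≤ s ^ ((n:ℝ) + α - 1) * (1-s) ^ (β - 1) := by positivity
    have hexpkey : Real.exp (-(x₀ * s)) ≤ Real.exp (-x₀) + x₀ * (1 - s) := by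
      have hA1 : Real.exp (-(x₀ * s)) ≤ 1 := Real.exp_le_one_iff.mpr (by nlinarith)
      have hB' : 1 - x₀ * (1 - s) ≤ Real.exp (-(x₀ * (1 - s))) := by
        have := Real.add_one_le_exp (-(x₀ * (1 - s))); linarith
      have hE : Real.exp (-(x₀ * s)) * Real.exp (-(x₀ * (1 - s))) = Real.exp (-x₀) := by
        rw [← Real.exp_add]; ring_nf
      have hc : (0:ℝ) ≤ x₀ * (1 - s) := by positivity
      nlinarith [Real.exp_pos (-(x₀ * s)),
        mul_nonneg (Real.exp_pos (-(x₀ * s))).le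
          (sub_nonneg.mpr (le_trans hB' (le_refl _)) : (0:ℝ) ≤ Real.exp (-(x₀ * (1-s))) - (1 - x₀ * (1-s))),
        mul_nonneg (sub_nonneg.mpr hA1) hc]
    have hrw : (1-s) ^ (β + 1 - 1) = (1-s) ^ (β - 1) * (1 - s) := by
      rw [show β + 1 - 1 = (β - 1) + 1 by ring, Real.rpow_add hs1, Real.rpow_one]
    calc s ^ ((n:ℝ) + α - 1) * (1-s) ^ (β - 1) * Real.exp (-(x₀ * s))
        ≤ s ^ ((n:ℝ) + α - 1) * (1-s) ^ (β - 1) * (Real.exp (-x₀) + x₀ * (1 - s)) :=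
          mul_le_mul_of_nonneg_left hexpkey hM
      _ = Real.exp (-x₀) * (s ^ ((n:ℝ) + α - 1) * (1-s) ^ (β - 1)) +
          x₀ * (s ^ ((n:ℝ) + α - 1) * (1-s) ^ (β + 1 - 1)) := by rw [hrw]; ring
  -- values of beta integrals
  have hval1 : ∀ n : ℕ, (∫ s in Ioo (0:ℝ) 1, s ^ ((n:ℝ) + α - 1) * (1-s) ^ (β - 1))
      = Real.Gamma ((n:ℝ) + α) * Real.Gamma β / Real.Gamma ((n:ℝ) + α + β) :=
    fun n => betaValue ((n:ℝ) + α) β (by positivity) hβ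
  have hval2 : ∀ n : ℕ, (∫ s in Ioo (0:ℝ) 1, s ^ ((n:ℝ) + α - 1) * (1-s) ^ (β + 1 - 1))
      = Real.Gamma ((n:ℝ) + α) * Real.Gamma (β + 1) / Real.Gamma ((n:ℝ) + α + (β + 1)) :=
    fun n => betaValue ((n:ℝ) + α) (β + 1) (by positivity) (by linarith)
  -- limits
  have hL1 : Tendsto (fun n : ℕ => (n:ℝ) ^ β *
      (Real.Gamma ((n:ℝ) + α) * Real.Gamma β / Real.Gamma ((n:ℝ) + α + β)))
      atTop (nhds (Real.Gamma β)) := by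
    have h := (gammaRatio α β hα hβ).mul_const (Real.Gamma β)
    rw [one_mul] at h
    apply h.congr
    intro n
    ring
  have hL2 : Tendsto (fun n : ℕ => (n:ℝ) ^ β *
      (Real.Gamma ((n:ℝ) + α) * Real.Gamma (β + 1) / Real.Gamma ((n:ℝ) + α + (β + 1))))
      atTop (nhds 0) := by
    have h1 := gammaRatio α (β + 1) hα (by linarith)
    have h2 : Tendsto (fun n : ℕ => ((n:ℝ))⁻¹) atTop (nhds 0) :=
      tendsto_inv_atTop_zero.comp tendsto_natCast_atTop_atTop
    have h3 := (h1.mul h2).mul_const (Real.Gamma (β + 1))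
    rw [one_mul, zero_mul] at h3
    apply h3.congr'
    filter_upwards [eventually_gt_atTop 0] with n hn
    have hnR : (0:ℝ) < n := by exact_mod_cast hn
    have hpow : (n:ℝ) ^ (β + 1) = (n:ℝ) ^ β * n := by
      rw [Real.rpow_add hnR, Real.rpow_one]
    rw [hpow]
    have hΓD : Real.Gamma ((n:ℝ) + α + (β + 1)) ≠ 0 :=
      (Real.Gamma_pos_of_pos (by positivity)).ne'
    field_simp
  -- squeeze
  have hg : Tendsto (fun n : ℕ => (n:ℝ) ^ β * I n) atTop
      (nhds (Real.exp (-x₀) * Real.Gamma β)) := by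
    apply tendsto_of_tendsto_of_tendsto_of_le_of_le
      (g := fun n : ℕ => Real.exp (-x₀) * ((n:ℝ) ^ β *
        (Real.Gamma ((n:ℝ) + α) * Real.Gamma β / Real.Gamma ((n:ℝ) + α + β))))
      (h := fun n : ℕ => Real.exp (-x₀) * ((n:ℝ) ^ β *
        (Real.Gamma ((n:ℝ) + α) * Real.Gamma β / Real.Gamma ((n:ℝ) + α + β))) +
        x₀ * ((n:ℝ) ^ β *
        (Real.Gamma ((n:ℝ) + α) * Real.Gamma (β + 1) / Real.Gamma ((n:ℝ) + α + (β + 1)))))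
    · exact hL1.const_mul _
    · have := (hL1.const_mul (Real.exp (-x₀))).add (hL2.const_mul x₀)
      rw [mul_zero, add_zero] at this
      exact this
    · intro n
      have h := mul_le_mul_of_nonneg_left (hlow n) (hnn n)
      rw [hval1 n] at h
      calc Real.exp (-x₀) * ((n:ℝ) ^ β *
            (Real.Gamma ((n:ℝ) + α) * Real.Gamma β / Real.Gamma ((n:ℝ) + α + β)))
          = (n:ℝ) ^ β * (Real.exp (-x₀) *
            (Real.Gamma ((n:ℝ) + α) * Real.Gamma β / Real.Gamma ((n:ℝ) + α + β))) := by ring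
        _ ≤ (n:ℝ) ^ β * I n := h
    · intro n
      have h := mul_le_mul_of_nonneg_left (hupp n) (hnn n)
      rw [hval1 n, hval2 n] at h
      calc (n:ℝ) ^ β * I n
          ≤ (n:ℝ) ^ β * (Real.exp (-x₀) *
              (Real.Gamma ((n:ℝ) + α) * Real.Gamma β / Real.Gamma ((n:ℝ) + α + β)) +
            x₀ * (Real.Gamma ((n:ℝ) + α) * Real.Gamma (β + 1) /
              Real.Gamma ((n:ℝ) + α + (β + 1)))) := h
        _ = _ := by ring
  -- conclusion
  have hfinal := hg.const_mul (Real.exp x₀ / Real.Gamma β)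
  have hone : Real.exp x₀ / Real.Gamma β * (Real.exp (-x₀) * Real.Gamma β) = 1 := by
    have hE : Real.exp x₀ * Real.exp (-x₀) = 1 := by
      rw [← Real.exp_add]; simp
    rw [div_mul_eq_mul_div, ← mul_assoc, hE, one_mul, div_self hΓβ.ne']
  rw [hone] at hfinal
  apply hfinal.congr'
  filter_upwards [eventually_gt_atTop 0] with n hn
  have hnR : (0:ℝ) < n := by exact_mod_cast hn
  have hnb : (0:ℝ) < (n:ℝ) ^ β := Real.rpow_pos_of_pos hnR β
  have hfac : (0:ℝ) < (Nat.factorial n : ℝ) := by positivity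
  have hxn : (0:ℝ) < x₀ ^ n := by positivity
  have hneg : (n:ℝ) ^ (-β) = ((n:ℝ) ^ β)⁻¹ := Real.rpow_neg hnR.le β
  rw [hPn n, hC, hneg]
  have hEx : Real.exp (-x₀) ≠ 0 := (Real.exp_pos _).ne'
  field_simp
  have hE : Real.exp x₀ * Real.exp (-x₀) = 1 := by rw [← Real.exp_add]; simp
  linear_combination I n * hE
end

section
/- Suppose a discrete distribution G on ℕ satisfies (1−G(n+1))/(1−G(n)) → 0 as n → ∞, and let Y₁, Y₂, … be i.i.d. with distribution G. Then there exists a sequence of integers (I_n) with P(max_{1≤i≤n} Y_i ∈ {I_n, I_n + 1}) → 1 as n → ∞. -/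
open Filter

theorem anderson_oscillation
    (G : ℕ → ℝ) (hmono : Monotone G) (h0 : ∀ n : ℕ, 0 ≤ G n) (h1 : ∀ n : ℕ, G n < 1)
    (hlim : Tendsto G atTop (nhds 1))
    (hratio : Tendsto (fun n : ℕ => (1 - G (n + 1)) / (1 - G n)) atTop (nhds 0)) :
    ∃ I : ℕ → ℕ, (∀ n : ℕ, 1 ≤ I n) ∧
      Tendsto (fun n : ℕ => G (I n + 1) ^ n - G (I n - 1) ^ n) atTop (nhds 1) := by
  set r : ℕ → ℝ := fun m => (1 - G (m + 1)) / (1 - G m) with hrdef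
  have hpos : ∀ m, 0 < 1 - G m := fun m => by linarith [h1 m]
  have hrpos : ∀ m, 0 < r m := fun m => div_pos (hpos _) (hpos _)
  have hrid : ∀ m, 1 - G (m + 1) = r m * (1 - G m) := by
    intro m
    rw [hrdef]
    field_simp
    rw [mul_div_assoc, div_self (hpos m).ne', mul_one]
  -- existence of the threshold index
  have hex : ∀ n : ℕ, ∃ m, 1 - G m ≤ 1 / ((n : ℝ) + 1) := by
    intro n
    have h01 : (0:ℝ) < 1 / ((n : ℝ) + 1) := by positivity
    have hev : ∀ᶠ m in atTop, 1 - 1 / ((n : ℝ) + 1) ≤ G m :=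
      hlim.eventually (eventually_ge_nhds (by linarith))
    obtain ⟨m, hm⟩ := hev.exists
    exact ⟨m, by linarith⟩
  set M : ℕ → ℕ := fun n => Nat.find (hex n) with hMdef
  have hM1 : ∀ n, 1 - G (M n) ≤ 1 / ((n : ℝ) + 1) := fun n => Nat.find_spec (hex n)
  have hM2 : ∀ n m, m < M n → 1 / ((n : ℝ) + 1) < 1 - G m := by
    intro n m hm
    have := Nat.find_min (hex n) hm
    push_neg at this
    exact this
  -- M tends to infinity
  have hMtop : Tendsto M atTop atTop := by
    rw [tendsto_atTop_atTop]
    intro b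
    obtain ⟨N, hN⟩ := exists_nat_gt (1 / (1 - G b))
    refine ⟨N, fun n hn => ?_⟩
    by_contra hcon
    push_neg at hcon
    have hMb : G (M n) ≤ G b := hmono (le_of_lt hcon)
    have h1n : 1 / ((n : ℝ) + 1) < 1 - G b := by
      rw [div_lt_iff₀ (by positivity)]
      rw [div_lt_iff₀ (hpos b)] at hN
      have : (N : ℝ) ≤ n := Nat.cast_le.2 hn
      nlinarith [hpos b]
    have := hM1 n
    linarith
  -- composed ratio limits
  have hsub : ∀ k : ℕ, Tendsto (fun n => M n - k) atTop atTop := by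
    intro k
    exact (tendsto_sub_atTop_nat k).comp hMtop
  have hr0 : Tendsto (fun n => r (M n)) atTop (nhds 0) := hratio.comp hMtop
  have hr1 : Tendsto (fun n => r (M n - 1)) atTop (nhds 0) := hratio.comp (hsub 1)
  have hr2 : Tendsto (fun n => r (M n - 2)) atTop (nhds 0) := hratio.comp (hsub 2)
  -- the oscillation point
  set J : ℕ → ℕ := fun n =>
    max 1 (if Real.sqrt (r (M n - 1)) < (n : ℝ) * (1 - G (M n)) then M n else M n - 1)
    with hJdef
  have hJ1 : ∀ n, 1 ≤ J n := fun n => le_max_left _ _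
  have hMev : ∀ᶠ n : ℕ in atTop, 2 ≤ M n ∧ 1 ≤ n := by
    filter_upwards [hMtop.eventually_ge_atTop 2, eventually_ge_atTop 1] with n h1 h2
    exact ⟨h1, h2⟩
  -- basic bound: n * (1 - G (M n)) ≤ 1
  have ha1 : ∀ n : ℕ, (n : ℝ) * (1 - G (M n)) ≤ 1 := by
    intro n
    have := hM1 n
    rw [div_eq_inv_mul, mul_one] at this
    calc (n : ℝ) * (1 - G (M n)) ≤ (n : ℝ) * ((n : ℝ) + 1)⁻¹ :=
          mul_le_mul_of_nonneg_left this (Nat.cast_nonneg n)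
      _ ≤ 1 := by
          rw [mul_inv_le_iff₀ (by positivity)]
          linarith
  -- T1 : n * (1 - G (J n + 1)) → 0
  have T1 : Tendsto (fun n : ℕ => (n : ℝ) * (1 - G (J n + 1))) atTop (nhds 0) := by
    have hg : Tendsto (fun n => max (r (M n)) (Real.sqrt (r (M n - 1)))) atTop (nhds 0) := by
      have hs : Tendsto (fun n => Real.sqrt (r (M n - 1))) atTop (nhds 0) := by
        have := (Real.continuous_sqrt.tendsto 0).comp hr1
        simpa [Function.comp_def] using this
      simpa using hr0.max hs
    apply squeeze_zero' (g := fun n => max (r (M n)) (Real.sqrt (r (M n - 1))))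
    · filter_upwards with n
      have := hpos (J n + 1)
      positivity
    · filter_upwards [hMev] with n hn
      obtain ⟨hn2, hn1⟩ := hn
      by_cases hc : Real.sqrt (r (M n - 1)) < (n : ℝ) * (1 - G (M n))
      · have hJn : J n = M n := by
          rw [hJdef]
          simp only [if_pos hc]
          omega
        rw [hJn]
        have : (n : ℝ) * (1 - G (M n + 1)) = r (M n) * ((n : ℝ) * (1 - G (M n))) := by
          rw [hrid (M n)]; ring
        rw [this]
        refine le_trans ?_ (le_max_left _ _)
        have h1 := ha1 n
        have h2 := (hrpos (M n)).le
        nlinarith [mul_nonneg (Nat.cast_nonneg n : (0:ℝ) ≤ n) (hpos (M n)).le]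
      · have hJn : J n = M n - 1 := by
          rw [hJdef]
          simp only [if_neg hc]
          omega
        have hJn1 : J n + 1 = M n := by omega
        rw [hJn1]
        push_neg at hc
        exact le_trans hc (le_max_right _ _)
    · exact hg
  -- T2 : n * (1 - G (J n - 1)) → ∞
  have T2 : Tendsto (fun n : ℕ => (n : ℝ) * (1 - G (J n - 1))) atTop atTop := by
    rw [tendsto_atTop]
    intro b
    set B : ℝ := max b 1 with hBdef
    have hB1 : (1:ℝ) ≤ B := le_max_right _ _
    have hB0 : (0:ℝ) < B := by linarith
    have hbB : b ≤ B := le_max_left _ _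
    have he1 : ∀ᶠ n : ℕ in atTop, r (M n - 1) ≤ 1 / B ^ 2 :=
      hr1.eventually (eventually_le_nhds (by positivity))
    have he2 : ∀ᶠ n : ℕ in atTop, r (M n - 2) ≤ 1 / (2 * B) :=
      hr2.eventually (eventually_le_nhds (by positivity))
    filter_upwards [hMev, he1, he2] with n hn h1' h2'
    obtain ⟨hn2, hn1⟩ := hn
    refine le_trans hbB ?_
    have hnp : (1:ℝ) ≤ (n : ℝ) := Nat.one_le_cast.2 hn1
    by_cases hc : Real.sqrt (r (M n - 1)) < (n : ℝ) * (1 - G (M n))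
    · -- J n = M n, J n - 1 = M n - 1
      have hJn : J n - 1 = M n - 1 := by
        rw [hJdef]
        simp only [if_pos hc]
        omega
      rw [hJn]
      -- n (1 - G (M n - 1)) = n (1 - G (M n)) / r (M n - 1) > sqrt r / r = 1 / sqrt r ≥ B
      have hid : 1 - G (M n) = r (M n - 1) * (1 - G (M n - 1)) := by
        have := hrid (M n - 1)
        rwa [show M n - 1 + 1 = M n by omega] at this
      have hrp := hrpos (M n - 1)
      have hsp : 0 < Real.sqrt (r (M n - 1)) := Real.sqrt_pos.2 hrp
      have hsq : Real.sqrt (r (M n - 1)) * Real.sqrt (r (M n - 1)) = r (M n - 1) :=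
        Real.mul_self_sqrt hrp.le
      have hsB : Real.sqrt (r (M n - 1)) ≤ 1 / B := by
        have := Real.sqrt_le_sqrt h1'
        rwa [show (1:ℝ) / B ^ 2 = (1/B)^2 by ring, Real.sqrt_sq (by positivity)] at this
      -- from hc : sqrt r < n (1 - G (M n)) = r * (n (1 - G (M n -1)))
      have hkey : Real.sqrt (r (M n - 1)) < r (M n - 1) * ((n : ℝ) * (1 - G (M n - 1))) := by
        calc Real.sqrt (r (M n - 1)) < (n : ℝ) * (1 - G (M n)) := hc
          _ = r (M n - 1) * ((n : ℝ) * (1 - G (M n - 1))) := by rw [hid]; ring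
      -- so n (1 - G (M n - 1)) > sqrt r / r * ... 
      set t : ℝ := (n : ℝ) * (1 - G (M n - 1)) with htdef
      have h1lt : 1 < Real.sqrt (r (M n - 1)) * t := by
        have h' : Real.sqrt (r (M n - 1)) * 1 <
            Real.sqrt (r (M n - 1)) * (Real.sqrt (r (M n - 1)) * t) := by
          rw [mul_one]
          calc Real.sqrt (r (M n - 1)) < r (M n - 1) * t := hkey
            _ = Real.sqrt (r (M n - 1)) * (Real.sqrt (r (M n - 1)) * t) := by
                nth_rewrite 1 [← hsq]; ring
        exact lt_of_mul_lt_mul_left h' hsp.le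
      have hBs : B * Real.sqrt (r (M n - 1)) ≤ 1 := by
        have := mul_le_mul_of_nonneg_left hsB hB0.le
        rwa [mul_one_div, div_self hB0.ne'] at this
      have : B * Real.sqrt (r (M n - 1)) < t * Real.sqrt (r (M n - 1)) := by
        calc B * Real.sqrt (r (M n - 1)) ≤ 1 := hBs
          _ < Real.sqrt (r (M n - 1)) * t := h1lt
          _ = t * Real.sqrt (r (M n - 1)) := by ring
      exact (lt_of_mul_lt_mul_right this hsp.le).le
    · -- J n = M n - 1, J n - 1 = M n - 2
      have hJn : J n - 1 = M n - 2 := by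
        rw [hJdef]
        simp only [if_neg hc]
        omega
      rw [hJn]
      have hid : 1 - G (M n - 1) = r (M n - 2) * (1 - G (M n - 2)) := by
        have := hrid (M n - 2)
        rwa [show M n - 2 + 1 = M n - 1 by omega] at this
      have hmin : 1 / ((n : ℝ) + 1) < 1 - G (M n - 1) := hM2 n (M n - 1) (by omega)
      have hrp := hrpos (M n - 2)
      -- n (1 - G (M n - 2)) = n (1 - G (M n -1)) / r (M n -2) > (n/(n+1)) / r ≥ (1/2) * 2B = B
      have h2B : r (M n - 2) * (2 * B) ≤ 1 := by
        have := mul_le_mul_of_nonneg_right h2' (by positivity : (0:ℝ) ≤ 2 * B)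
        rwa [div_mul_cancel₀] at this
        positivity
      have hnn : (n : ℝ) / ((n : ℝ) + 1) ≥ 1 / 2 := by
        rw [ge_iff_le, div_le_div_iff₀ (by norm_num) (by positivity)]
        linarith
      have hkey : (n : ℝ) / ((n : ℝ) + 1) < r (M n - 2) * ((n : ℝ) * (1 - G (M n - 2))) := by
        have := mul_lt_mul_of_pos_left hmin (by positivity : (0:ℝ) < (n : ℝ))
        calc (n : ℝ) / ((n : ℝ) + 1) = (n : ℝ) * (1 / ((n : ℝ) + 1)) := by ring
          _ < (n : ℝ) * (1 - G (M n - 1)) := this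
          _ = r (M n - 2) * ((n : ℝ) * (1 - G (M n - 2))) := by rw [hid]; ring
      nlinarith [mul_pos (by positivity : (0:ℝ) < (n:ℝ)) (hpos (M n - 2))]
  refine ⟨J, hJ1, ?_⟩
  -- G (J n + 1) ^ n → 1
  have L1 : Tendsto (fun n : ℕ => G (J n + 1) ^ n) atTop (nhds 1) := by
    have hlow : Tendsto (fun n : ℕ => 1 - (n : ℝ) * (1 - G (J n + 1))) atTop (nhds 1) := by
      have := Tendsto.sub (tendsto_const_nhds : Tendsto (fun _ : ℕ => (1:ℝ)) atTop (nhds 1)) T1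
      simpa using this
    refine tendsto_of_tendsto_of_tendsto_of_le_of_le hlow tendsto_const_nhds ?_ ?_
    · intro n
      have hb := one_add_mul_le_pow (a := G (J n + 1) - 1) (by nlinarith [h0 (J n + 1)]) n
      have : (1 : ℝ) + n * (G (J n + 1) - 1) = 1 - (n : ℝ) * (1 - G (J n + 1)) := by ring
      rw [this] at hb
      simpa using hb
    · intro n
      exact pow_le_one₀ (h0 _) (h1 _).le
  -- G (J n - 1) ^ n → 0
  have L2 : Tendsto (fun n : ℕ => G (J n - 1) ^ n) atTop (nhds 0) := by
    apply squeeze_zero (fun n => pow_nonneg (h0 _) n)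
      (g := fun n : ℕ => Real.exp (-((n : ℝ) * (1 - G (J n - 1)))))
    · intro n
      have h1' : G (J n - 1) ≤ Real.exp (-(1 - G (J n - 1))) := by
        have := Real.add_one_le_exp (-(1 - G (J n - 1)))
        linarith
      calc G (J n - 1) ^ n ≤ Real.exp (-(1 - G (J n - 1))) ^ n :=
            pow_le_pow_left₀ (h0 _) h1' n
        _ = Real.exp (-((n : ℝ) * (1 - G (J n - 1)))) := by
            rw [← Real.exp_nat_mul]; ring_nf
    · exact Real.tendsto_exp_atBot.comp (tendsto_neg_atBot_iff.2 T2)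
  have := L1.sub L2
  simpa using this
end
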